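/- Let P_n(λ) = det(λ J_{[0,n-1]} - H_{[0,n-1]}) with J_{[0,n]} positive definite. Then the zeros of P_n and P_{n+1} are all real; moreover -η_n P_n/P_{n+1} is an R₀-function for η_n = det J_{[0,n]}/det J_{[0,n-1]} > 0, because -P_n(λ)/P_{n+1}(λ) = ((H_{[0,n]} - λ J_{[0,n]})^{-1} e_n, e_n); consequently, the zeros of P_n and P_{n+1} interlace strictly. -/

import Mathlib

open Complex Matrix

/-- The truncation `H_{[off, off+m-1]}` of the Hermitian tridiagonal matrix `H`
with diagonal entries `a⁽¹⁾ₗ` and off-diagonal entries `zₗ bₗ`, `conj(zₗ) bₗ`. -/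
def npH (a1 b : ℕ → ℝ) (z : ℕ → ℂ) (off m : ℕ) : Matrix (Fin m) (Fin m) ℂ :=
  Matrix.of fun i k =>
    if (i : ℕ) = (k : ℕ) then (a1 (off + i) : ℂ)
    else if (i : ℕ) + 1 = (k : ℕ) then z (off + i) * (b (off + i) : ℂ)
    else if (k : ℕ) + 1 = (i : ℕ) then (starRingEnd ℂ) (z (off + k)) * (b (off + k) : ℂ)
    else 0

/-- The truncation `J_{[off, off+m-1]}` of the positive definite real symmetric
tridiagonal matrix `J` with diagonal entries `1 + bₗ²` and off-diagonal `bₗ`. -/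
def npJ (b : ℕ → ℝ) (off m : ℕ) : Matrix (Fin m) (Fin m) ℂ :=
  Matrix.of fun i k =>
    if (i : ℕ) = (k : ℕ) then (1 : ℂ) + (b (off + i) : ℂ) ^ 2
    else if (i : ℕ) + 1 = (k : ℕ) then (b (off + i) : ℂ)
    else if (k : ℕ) + 1 = (i : ℕ) then (b (off + k) : ℂ)
    else 0

/-! For `B(λ) = λ • J - H` with `H` Hermitian and `J` positive definite, a kernel vector `v` of
`B(λ)` gives `λ ⟪J v, v⟫ = ⟪H v, v⟫ ∈ ℝ` with `⟪J v, v⟫ > 0`, so `λ` is real. Cramer's rule gives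
`Pₙ / Pₙ₊₁ = (B(λ)⁻¹)ₙₙ`, and for `u = B(λ)⁻¹ eₙ` one has
`conj (B(λ)⁻¹)ₙₙ = ⟪B(λ) u, u⟫ = λ ⟪J u, u⟫ - ⟪H u, u⟫`, whose imaginary part is the Herglotz
property; on the real axis `d/dt (B(t)⁻¹)ₙₙ = -⟪J u, u⟫ < 0`. Hence between consecutive zeros
`x < y` of `Pₙ₊₁` the real function `Pₙ / Pₙ₊₁` strictly decreases. It is unbounded at `x` and at
`y` because `Pₙ` and `Pₙ₊₁` have no common zero: the off-diagonal entries `(t - zⱼ) bⱼ` of the real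
tridiagonal pencil never vanish, so its kernel vectors have nonzero last coordinate, and two such
kernel vectors of `B(t)` and of its leading block would contradict `B(t)ᴴ = B(t)`. So it vanishes
exactly once. -/

open scoped ComplexOrder
open Filter Topology Set

namespace Matrix

variable {ι : Type*} [Fintype ι]

theorem inv_neg {R : Type*} [CommRing R] [DecidableEq ι] (A : Matrix ι ι R) : (-A)⁻¹ = -A⁻¹ := by
  by_cases h : IsUnit A.det
  · exact inv_eq_right_inv (by rw [neg_mul_neg, mul_nonsing_inv _ h])
  · have h' : ¬IsUnit (-A).det := by
      rwa [det_neg, IsUnit.mul_iff, and_iff_right (isUnit_neg_one.pow _)]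
    rw [nonsing_inv_apply_not_isUnit _ h, nonsing_inv_apply_not_isUnit _ h', neg_zero]

theorem inv_apply_last_last {K : Type*} [Field K] {n : ℕ}
    (M : Matrix (Fin (n + 1)) (Fin (n + 1)) K) :
    M⁻¹ (Fin.last n) (Fin.last n) = (M.submatrix Fin.castSucc Fin.castSucc).det / M.det := by
  rw [inv_def, smul_apply, adjugate_fin_succ_eq_det_submatrix, Fin.succAbove_last,
    Ring.inverse_eq_inv', smul_eq_mul, Fin.val_last, Even.neg_one_pow ⟨n, rfl⟩, one_mul,
    div_eq_inv_mul]

section Pencil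

variable {H J : Matrix ι ι ℂ}

theorem im_star_dotProduct_smul_sub_mulVec (hH : H.IsHermitian) (hJ : J.IsHermitian)
    (lam : ℂ) (v : ι → ℂ) :
    (star v ⬝ᵥ (lam • J - H) *ᵥ v).im = lam.im * (star v ⬝ᵥ J *ᵥ v).re := by
  have hJv : (star v ⬝ᵥ J *ᵥ v).im = 0 := hJ.im_star_dotProduct_mulVec_self v
  have hHv : (star v ⬝ᵥ H *ᵥ v).im = 0 := hH.im_star_dotProduct_mulVec_self v
  rw [sub_mulVec, dotProduct_sub, smul_mulVec, dotProduct_smul, smul_eq_mul, sub_im, mul_im,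
    hJv, hHv]
  ring

variable [DecidableEq ι]

theorem im_eq_zero_of_det_smul_sub_eq_zero (hH : H.IsHermitian) (hJ : J.PosDef) {lam : ℂ}
    (h : (lam • J - H).det = 0) : lam.im = 0 := by
  obtain ⟨v, hv, hker⟩ := exists_mulVec_eq_zero_iff.mpr h
  have := im_star_dotProduct_smul_sub_mulVec hH hJ.isHermitian lam v
  rw [hker, dotProduct_zero, zero_im, eq_comm] at this
  exact (mul_eq_zero.mp this).resolve_right (pos_iff.mp (hJ.dotProduct_mulVec_pos hv)).1.ne'

theorem exists_pos_im_inv_smul_sub_apply_self (hH : H.IsHermitian) (hJ : J.PosDef) {lam : ℂ}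
    (h : (lam • J - H).det ≠ 0) (k : ι) :
    ∃ g : ℝ, 0 < g ∧ ((lam • J - H)⁻¹ k k).im = -(g * lam.im) := by
  set B := lam • J - H
  set u := B⁻¹ *ᵥ Pi.single k 1
  have hBu : B *ᵥ u = Pi.single k 1 := by
    rw [mulVec_mulVec, mul_nonsing_inv _ (isUnit_iff_ne_zero.mpr h), one_mulVec]
  have hu : u ≠ 0 := by
    rintro hu
    simpa [hu] using congrFun hBu k
  have hquad : star u ⬝ᵥ B *ᵥ u = star (B⁻¹ k k) := by
    rw [hBu, dotProduct_single, mul_one, Pi.star_apply]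
    simp [u, mulVec_single]
  refine ⟨_, (pos_iff.mp (hJ.dotProduct_mulVec_pos hu)).1, ?_⟩
  have := im_star_dotProduct_smul_sub_mulVec hH hJ.isHermitian lam u
  rw [hquad, star_def, conj_im] at this
  linarith

theorem ofReal_re_inv_smul_sub_apply_self (hH : H.IsHermitian) (hJ : J.PosDef) {t : ℝ}
    (h : ((t : ℂ) • J - H).det ≠ 0) (k : ι) :
    (((((t : ℂ) • J - H)⁻¹ k k).re : ℝ) : ℂ) = ((t : ℂ) • J - H)⁻¹ k k := by
  obtain ⟨g, -, him⟩ := exists_pos_im_inv_smul_sub_apply_self hH hJ h k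
  rw [ofReal_im, mul_zero, neg_zero] at him
  exact Complex.ext (ofReal_re _) (by rw [ofReal_im, him])

theorem pos_im_neg_mul_inv_smul_sub_apply_self_div_im (hH : H.IsHermitian) (hJ : J.PosDef)
    {c : ℂ} (hc : 0 < c) {lam : ℂ} (hlam : lam.im ≠ 0) (k : ι) :
    0 < (-c * (lam • J - H)⁻¹ k k).im / lam.im := by
  obtain ⟨g, hg, him⟩ := exists_pos_im_inv_smul_sub_apply_self hH hJ
    (fun h => hlam (im_eq_zero_of_det_smul_sub_eq_zero hH hJ h)) k
  obtain ⟨hc_re, hc_im⟩ := pos_iff.mp hc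
  rw [mul_im, neg_re, neg_im, ← hc_im, him, neg_zero, zero_mul, add_zero,
    show -c.re * -(g * lam.im) = c.re * g * lam.im by ring, mul_div_cancel_right₀ _ hlam]
  positivity

theorem hasDerivAt_inv_smul_sub_apply (H J : Matrix ι ι ℂ) {lam : ℂ}
    (h : (lam • J - H).det ≠ 0) (i j : ι) :
    HasDerivAt (fun μ : ℂ => (μ • J - H)⁻¹ i j)
      (-((lam • J - H)⁻¹ * J * (lam • J - H)⁻¹) i j) lam := by
  set B : ℂ → Matrix ι ι ℂ := fun μ => μ • J - H
  have hB : Continuous B := by fun_prop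
  have hinv : ContinuousAt (fun μ => (B μ)⁻¹) lam :=
    (continuousAt_matrix_inv _ (by rw [Ring.inverse_eq_inv']; exact continuousAt_inv₀ h)).comp
      hB.continuousAt
  have hunit : ∀ᶠ μ in 𝓝 lam, IsUnit (B μ) :=
    (hB.matrix_det.continuousAt.eventually_ne h).mono fun μ hμ =>
      (isUnit_iff_isUnit_det _).mpr (isUnit_iff_ne_zero.mpr hμ)
  have hslope : ∀ᶠ μ in 𝓝[≠] lam, slope (fun μ => (B μ)⁻¹ i j) lam μ =
      -((B μ)⁻¹ * J * (B lam)⁻¹) i j := by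
    filter_upwards [nhdsWithin_le_nhds hunit, self_mem_nhdsWithin] with μ hμ hne
    have hsub : B lam - B μ = (lam - μ) • J := by simp only [B]; module
    rw [slope_def_field, ← sub_apply, inv_sub_inv (iff_of_true hμ hunit.self_of_nhds), hsub,
      Matrix.mul_smul, Matrix.smul_mul, smul_apply, smul_eq_mul, ← neg_sub, neg_mul, neg_div,
      mul_div_cancel_left₀ _ (sub_ne_zero.mpr hne)]
  rw [hasDerivAt_iff_tendsto_slope, tendsto_congr' hslope]
  have hentry : Continuous fun X : Matrix ι ι ℂ => -(X * J * (B lam)⁻¹) i j :=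
    (((continuous_id.matrix_mul continuous_const).matrix_mul continuous_const).matrix_elem i j).neg
  exact (hentry.continuousAt.comp hinv).tendsto.mono_left nhdsWithin_le_nhds

theorem re_inv_mul_mul_inv_apply_self_pos (hH : H.IsHermitian) (hJ : J.PosDef) {t : ℝ}
    (h : ((t : ℂ) • J - H).det ≠ 0) (k : ι) :
    0 < ((((t : ℂ) • J - H)⁻¹ * J * ((t : ℂ) • J - H)⁻¹) k k).re := by
  have hB : ((t : ℂ) • J - H).IsHermitian := (hJ.isHermitian.smul (conj_ofReal t)).sub hH
  have hR : Function.Injective ((t : ℂ) • J - H)⁻¹.mulVec := mulVec_injective_iff_isUnit.mpr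
    ((isUnit_iff_isUnit_det _).mpr (isUnit_nonsing_inv_det_iff.mpr (isUnit_iff_ne_zero.mpr h)))
  have hpos := (hJ.conjTranspose_mul_mul_same hR).diag_pos (i := k)
  rw [hB.inv.eq] at hpos
  exact (pos_iff.mp hpos).1

theorem hasDerivAt_re_inv_smul_sub_apply_self (H J : Matrix ι ι ℂ) {t : ℝ}
    (h : ((t : ℂ) • J - H).det ≠ 0) (k : ι) :
    HasDerivAt (fun s : ℝ => (((s : ℂ) • J - H)⁻¹ k k).re)
      (-((((t : ℂ) • J - H)⁻¹ * J * ((t : ℂ) • J - H)⁻¹) k k).re) t := by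
  simpa using (hasDerivAt_inv_smul_sub_apply H J h k k).real_of_complex

theorem continuousOn_re_inv_smul_sub_apply_self (H J : Matrix ι ι ℂ) (k : ι) {s : Set ℝ}
    (h : ∀ t ∈ s, ((t : ℂ) • J - H).det ≠ 0) :
    ContinuousOn (fun t : ℝ => (((t : ℂ) • J - H)⁻¹ k k).re) s := fun t ht =>
  (hasDerivAt_re_inv_smul_sub_apply_self H J (h t ht) k).continuousAt.continuousWithinAt

theorem strictAntiOn_re_inv_smul_sub_apply_self (hH : H.IsHermitian) (hJ : J.PosDef) (k : ι)
    {s : Set ℝ} (hs : Convex ℝ s) (h : ∀ t ∈ s, ((t : ℂ) • J - H).det ≠ 0) :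
    StrictAntiOn (fun t : ℝ => (((t : ℂ) • J - H)⁻¹ k k).re) s :=
  strictAntiOn_of_hasDerivWithinAt_neg hs (continuousOn_re_inv_smul_sub_apply_self H J k h)
    (fun t ht =>
      (hasDerivAt_re_inv_smul_sub_apply_self H J (h t (interior_subset ht)) k).hasDerivWithinAt)
    (fun t ht =>
      neg_neg_of_pos (re_inv_mul_mul_inv_apply_self_pos hH hJ (h t (interior_subset ht)) k))

end Pencil

theorem eq_zero_of_mulVec_eq_zero_of_apply_last {K : Type*} [Field K] {m : ℕ}
    {M : Matrix (Fin (m + 1)) (Fin (m + 1)) K}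
    (hM : (M.submatrix Fin.succ Fin.castSucc).det ≠ 0) {v : Fin (m + 1) → K}
    (hv : M *ᵥ v = 0) (hlast : v (Fin.last m) = 0) : v = 0 := by
  have hinit : M.submatrix Fin.succ Fin.castSucc *ᵥ (v ∘ Fin.castSucc) = 0 := by
    ext i
    simpa [mulVec, dotProduct, Fin.sum_univ_castSucc, hlast] using congrFun hv i.succ
  have := eq_zero_of_mulVec_eq_zero hM hinit
  ext j
  induction j using Fin.lastCases with
  | last => exact hlast
  | cast j => exact congrFun this j

theorem IsHermitian.star_dotProduct_col_last_mul_eq_zero {R : Type*} [CommRing R] [StarRing R]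
    {m : ℕ} {B : Matrix (Fin (m + 1)) (Fin (m + 1)) R} (hB : B.IsHermitian) {v : Fin m → R}
    {w : Fin (m + 1) → R} (hw : B *ᵥ w = 0)
    (hv : B.submatrix Fin.castSucc Fin.castSucc *ᵥ v = 0) :
    (star v ⬝ᵥ fun i => B i.castSucc (Fin.last m)) * w (Fin.last m) = 0 := by
  have hrows : B.submatrix Fin.castSucc Fin.castSucc *ᵥ (w ∘ Fin.castSucc) =
      -fun i => B i.castSucc (Fin.last m) * w (Fin.last m) := by
    ext i
    simpa [mulVec, dotProduct, Fin.sum_univ_castSucc, eq_neg_iff_add_eq_zero] using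
      congrFun hw i.castSucc
  have hvB : star v ᵥ* B.submatrix Fin.castSucc Fin.castSucc = 0 := by
    rw [← (hB.submatrix Fin.castSucc).eq, ← star_mulVec, hv, star_zero]
  have := dotProduct_mulVec (star v) (B.submatrix Fin.castSucc Fin.castSucc) (w ∘ Fin.castSucc)
  rw [hvB, zero_dotProduct, hrows, dotProduct_neg, neg_eq_zero] at this
  rw [← this, dotProduct, dotProduct, Finset.sum_mul]
  simp [mul_assoc]

end Matrix

theorem Asymptotics.IsBigO.eq_zero_of_continuousAt {α E F : Type*} [TopologicalSpace α]
    [NormedAddCommGroup E] [NormedAddCommGroup F] {p : α → E} {q : α → F} {a : α}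
    {l : Filter α} [l.NeBot] (hpq : p =O[l] q) (hl : l ≤ 𝓝 a) (hp : ContinuousAt p a)
    (hq : ContinuousAt q a) (hqa : q a = 0) : p a = 0 :=
  tendsto_nhds_unique (hp.tendsto.mono_left hl)
    (hpq.trans_tendsto (hqa ▸ hq.tendsto.mono_left hl))

theorem existsUnique_zero_of_eq_smul_of_strictAntiOn {E : Type*} [NormedAddCommGroup E]
    [NormedSpace ℝ E] {p q : ℝ → E} {w : ℝ → ℝ} {x y : ℝ} (hxy : x < y) (hp : Continuous p) (hq : Continuous q)
    (hqx : q x = 0) (hqy : q y = 0) (hq0 : ∀ t ∈ Ioo x y, q t ≠ 0) (hpx : p x ≠ 0)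
    (hpy : p y ≠ 0) (hw : StrictAntiOn w (Ioo x y)) (hwc : ContinuousOn w (Ioo x y))
    (hpq : ∀ t ∈ Ioo x y, p t = w t • q t) :
    ∃! t, t ∈ Ioo x y ∧ p t = 0 := by
  have unbounded : ∀ {l : Filter ℝ} [l.NeBot] {a : ℝ}, l ≤ 𝓝 a → q a = 0 → p a ≠ 0 →
      ∀ C, ¬ ∀ᶠ t in l, t ∈ Ioo x y ∧ |w t| ≤ C := by
    intro l _ a hl hqa hpa C hC
    refine hpa (Asymptotics.IsBigO.eq_zero_of_continuousAt ?_ hl hp.continuousAt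
      hq.continuousAt hqa)
    refine Asymptotics.IsBigO.of_bound C (hC.mono fun t ⟨ht, hwt⟩ => ?_)
    rw [hpq t ht, norm_smul, Real.norm_eq_abs]
    exact mul_le_mul_of_nonneg_right hwt (norm_nonneg _)
  obtain ⟨m, hm⟩ := nonempty_Ioo.mpr hxy
  obtain ⟨t₁, ht₁, hwt₁⟩ : ∃ t ∈ Ioc x m, 0 ≤ w t := by
    by_contra! hneg
    refine unbounded (l := 𝓝[>] x) nhdsWithin_le_nhds hqx hpx |w m| ?_
    filter_upwards [Ioc_mem_nhdsGT hm.1] with t ht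
    have htI : t ∈ Ioo x y := ⟨ht.1, ht.2.trans_lt hm.2⟩
    refine ⟨htI, abs_le_abs_of_nonpos (hneg t ht).le (hw.antitoneOn htI hm ht.2)⟩
  obtain ⟨t₂, ht₂, hwt₂⟩ : ∃ t ∈ Ico m y, w t ≤ 0 := by
    by_contra! hpos
    refine unbounded (l := 𝓝[<] y) nhdsWithin_le_nhds hqy hpy |w m| ?_
    filter_upwards [Ico_mem_nhdsLT hm.2] with t ht
    have htI : t ∈ Ioo x y := ⟨hm.1.trans_le ht.1, ht.2⟩
    refine ⟨htI, abs_le_abs_of_nonneg (hpos t ht).le (hw.antitoneOn hm htI ht.1)⟩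
  have hsub : Icc t₁ t₂ ⊆ Ioo x y := fun t ht => ⟨ht₁.1.trans_le ht.1, ht.2.trans_lt ht₂.2⟩
  obtain ⟨t, ht, hwt⟩ := intermediate_value_Icc' (ht₁.2.trans ht₂.1) (hwc.mono hsub) ⟨hwt₂, hwt₁⟩
  refine ⟨t, ⟨hsub ht, by rw [hpq t (hsub ht), hwt, zero_smul]⟩, fun s ⟨hs, hps⟩ => ?_⟩
  have hws : w s = 0 := by
    rw [hpq s hs] at hps
    exact (smul_eq_zero.mp hps).resolve_right (hq0 s hs)
  exact hw.injOn hs (hsub ht) (hws.trans hwt.symm)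

section Tridiagonal

variable {a1 b : ℕ → ℝ} {z : ℕ → ℂ}

def npJFactor (b : ℕ → ℝ) (off m : ℕ) : Matrix (Fin m) (Fin (m + 1)) ℂ :=
  Matrix.of fun i j =>
    (if j = i.castSucc then 1 else 0) + (if j = i.succ then (b (off + i) : ℂ) else 0)

theorem npJ_eq_mul_conjTranspose (off m : ℕ) :
    npJ b off m = npJFactor b off m * (npJFactor b off m)ᴴ := by
  ext i k
  simp [npJ, npJFactor, mul_apply, add_mul, mul_add, Finset.sum_add_distrib]
  simp only [← Fin.ext_iff, Fin.ext_iff (a := k.castSucc), Fin.ext_iff (a := i.castSucc),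
    Fin.val_succ, Fin.val_castSucc]
  split_ifs <;> subst_vars <;> first | omega | simp [sq]

theorem npJ_posDef (off m : ℕ) : (npJ b off m).PosDef := by
  set D := (npJFactor b off m).submatrix id Fin.castSucc
  have hD : D.det = 1 := by
    rw [det_of_isUpperTriangular]
    · simp [D, npJFactor, Fin.ext_iff]
    · intro i j (hji : j < i)
      rw [Fin.lt_def] at hji
      simp only [D, npJFactor, submatrix_apply, of_apply, id, Fin.ext_iff, Fin.val_castSucc,
        Fin.val_succ]
      rw [if_neg (by omega), if_neg (by omega), add_zero]
  have hDinj : Function.Injective D.vecMul :=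
    vecMul_injective_iff_isUnit.mpr ((isUnit_iff_isUnit_det _).mpr (by simp [hD]))
  rw [npJ_eq_mul_conjTranspose]
  refine PosDef.mul_conjTranspose_self _ fun v w hvw => hDinj ?_
  ext j
  simpa [D, vecMul, dotProduct] using congrFun hvw j.castSucc

theorem npH_isHermitian (off m : ℕ) : (npH a1 b z off m).IsHermitian := by
  ext i k
  simp only [conjTranspose_apply, npH, of_apply]
  split_ifs <;> first | omega | simp_all

theorem smul_npJ_sub_npH_apply (lam : ℂ) (off m : ℕ) (i k : Fin m) :
    (lam • npJ b off m - npH a1 b z off m) i k =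
      if (i : ℕ) = k then lam * (1 + (b (off + i) : ℂ) ^ 2) - a1 (off + i)
      else if (i : ℕ) + 1 = k then (lam - z (off + i)) * b (off + i)
      else if (k : ℕ) + 1 = i then (lam - starRingEnd ℂ (z (off + k))) * b (off + k)
      else 0 := by
  simp only [Matrix.sub_apply, Matrix.smul_apply, npJ, npH, of_apply, smul_eq_mul]
  split_ifs <;> ring

theorem det_submatrix_succ_castSucc_smul_npJ_sub_npH_ne_zero (hb : ∀ j, b j ≠ 0)
    (hz : ∀ j, (z j).im ≠ 0) (t : ℝ) (off m : ℕ) :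
    (((t : ℂ) • npJ b off (m + 1) - npH a1 b z off (m + 1)).submatrix
      Fin.succ Fin.castSucc).det ≠ 0 := by
  rw [det_of_isUpperTriangular]
  · refine Finset.prod_ne_zero_iff.mpr fun i _ => ?_
    simp only [submatrix_apply, smul_npJ_sub_npH_apply, Fin.val_castSucc, Fin.val_succ]
    rw [if_neg (by omega), if_neg (by omega), if_pos trivial]
    refine mul_ne_zero (fun h => hz (off + i) ?_) (ofReal_ne_zero.mpr (hb _))
    simpa using congrArg Complex.im h
  · intro i j (hji : j < i)
    rw [Fin.lt_def] at hji
    simp only [submatrix_apply, smul_npJ_sub_npH_apply, Fin.val_castSucc, Fin.val_succ]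
    rw [if_neg (by omega), if_neg (by omega), if_neg (by omega)]

theorem apply_last_ne_zero_of_smul_npJ_sub_npH_mulVec_eq_zero (hb : ∀ j, b j ≠ 0)
    (hz : ∀ j, (z j).im ≠ 0) (t : ℝ) (off : ℕ) {m : ℕ} {v : Fin (m + 1) → ℂ}
    (hv : ((t : ℂ) • npJ b off (m + 1) - npH a1 b z off (m + 1)) *ᵥ v = 0) (hv0 : v ≠ 0) :
    v (Fin.last m) ≠ 0 := fun hlast =>
  hv0 (eq_zero_of_mulVec_eq_zero_of_apply_last
    (det_submatrix_succ_castSucc_smul_npJ_sub_npH_ne_zero hb hz t off m) hv hlast)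

theorem smul_npJ_sub_npH_submatrix_castSucc (lam : ℂ) (off m : ℕ) :
    (lam • npJ b off (m + 1) - npH a1 b z off (m + 1)).submatrix Fin.castSucc Fin.castSucc =
      lam • npJ b off m - npH a1 b z off m := rfl

theorem det_smul_npJ_sub_npH_ne_zero_of_det_succ_eq_zero (hb : ∀ j, b j ≠ 0)
    (hz : ∀ j, (z j).im ≠ 0) (t : ℝ) (off n : ℕ)
    (h : ((t : ℂ) • npJ b off (n + 1) - npH a1 b z off (n + 1)).det = 0) :
    ((t : ℂ) • npJ b off n - npH a1 b z off n).det ≠ 0 := by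
  intro h0
  cases n with
  | zero => simp at h0
  | succ k =>
    set B := (t : ℂ) • npJ b off (k + 2) - npH a1 b z off (k + 2)
    have hB : B.IsHermitian :=
      ((npJ_posDef off _).isHermitian.smul (conj_ofReal t)).sub (npH_isHermitian off _)
    obtain ⟨w, hw0, hw⟩ := exists_mulVec_eq_zero_iff.mpr h
    obtain ⟨v, hv0, hv⟩ := exists_mulVec_eq_zero_iff.mpr h0
    have hwl := apply_last_ne_zero_of_smul_npJ_sub_npH_mulVec_eq_zero hb hz t off hw hw0
    have hvl := apply_last_ne_zero_of_smul_npJ_sub_npH_mulVec_eq_zero hb hz t off hv hv0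
    have hcol : (star v ⬝ᵥ fun i => B i.castSucc (Fin.last (k + 1))) =
        star (v (Fin.last k)) * (((t : ℂ) - z (off + k)) * b (off + k)) := by
      rw [dotProduct, Fin.sum_univ_castSucc, Finset.sum_eq_zero fun i _ => ?_, zero_add]
      · simp only [Pi.star_apply, B, smul_npJ_sub_npH_apply, Fin.val_castSucc, Fin.val_last]
        rw [if_neg (by omega), if_pos trivial]
      · simp only [B, smul_npJ_sub_npH_apply, Fin.val_castSucc, Fin.val_last]
        rw [if_neg (by omega), if_neg (by omega), if_neg (by omega), mul_zero]
    have key := hB.star_dotProduct_col_last_mul_eq_zero hw hv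
    rw [hcol] at key
    have htz : (t : ℂ) - z (off + k) ≠ 0 := fun h => hz (off + k) (by simpa using congrArg im h)
    simp [hvl, hwl, htz, hb] at key

theorem continuous_det_ofReal_smul_npJ_sub_npH (off m : ℕ) :
    Continuous fun t : ℝ => ((t : ℂ) • npJ b off m - npH a1 b z off m).det :=
  (by fun_prop : Continuous fun t : ℝ => (t : ℂ) • npJ b off m - npH a1 b z off m).matrix_det

theorem existsUnique_mem_Ioo_det_smul_npJ_sub_npH_eq_zero (hb : ∀ j, b j ≠ 0)
    (hz : ∀ j, (z j).im ≠ 0) (off n : ℕ) {x y : ℝ} (hxy : x < y)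
    (hx : ((x : ℂ) • npJ b off (n + 1) - npH a1 b z off (n + 1)).det = 0)
    (hy : ((y : ℂ) • npJ b off (n + 1) - npH a1 b z off (n + 1)).det = 0)
    (hxy0 : ∀ t ∈ Ioo x y, ((t : ℂ) • npJ b off (n + 1) - npH a1 b z off (n + 1)).det ≠ 0) :
    ∃! t, t ∈ Ioo x y ∧ ((t : ℂ) • npJ b off n - npH a1 b z off n).det = 0 := by
  have hH := npH_isHermitian (a1 := a1) (b := b) (z := z) off (n + 1)
  have hJ := npJ_posDef (b := b) off (n + 1)
  refine existsUnique_zero_of_eq_smul_of_strictAntiOn hxy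
    (continuous_det_ofReal_smul_npJ_sub_npH off n)
    (continuous_det_ofReal_smul_npJ_sub_npH off (n + 1)) hx hy hxy0
    (det_smul_npJ_sub_npH_ne_zero_of_det_succ_eq_zero hb hz x off n hx)
    (det_smul_npJ_sub_npH_ne_zero_of_det_succ_eq_zero hb hz y off n hy)
    (strictAntiOn_re_inv_smul_sub_apply_self hH hJ (Fin.last n) (convex_Ioo x y) hxy0)
    (continuousOn_re_inv_smul_sub_apply_self _ _ (Fin.last n) hxy0) fun t ht => ?_
  rw [real_smul, ofReal_re_inv_smul_sub_apply_self hH hJ (hxy0 t ht), inv_apply_last_last,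
    smul_npJ_sub_npH_submatrix_castSucc, div_mul_cancel₀ _ (hxy0 t ht)]

end Tridiagonal

/-- for `P_j(λ) = det(λ J_{[0,j-1]} - H_{[0,j-1]})`, the zeros of `Pₙ`
and `P_{n+1}` are real; `-Pₙ(λ)/P_{n+1}(λ) = ((H_{[0,n]} - λJ_{[0,n]})⁻¹ eₙ, eₙ)`,
so `-ηₙ Pₙ/P_{n+1}` (with `ηₙ = det J_{[0,n]}/det J_{[0,n-1]}`) is an `R₀`-function;
consequently the zeros of `Pₙ` and `P_{n+1}` interlace strictly. -/
theorem pencil_char_polys_interlace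
    (a1 b : ℕ → ℝ) (hb : ∀ j, 0 < b j)
    (z : ℕ → ℂ) (hz : ∀ j, 0 < (z j).im) (n : ℕ)
    (P : ℕ → ℂ → ℂ)
    (hP : ∀ (j : ℕ) (lam : ℂ), P j lam = (lam • npJ b 0 j - npH a1 b z 0 j).det)
    (eta : ℂ) (heta : eta = (npJ b 0 (n + 1)).det / (npJ b 0 n).det) :
    (∀ lam : ℂ, (P n lam = 0 ∨ P (n + 1) lam = 0) → lam.im = 0) ∧
    (∀ lam : ℂ, lam.im ≠ 0 →
      -(P n lam) / P (n + 1) lam =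
        (npH a1 b z 0 (n + 1) - lam • npJ b 0 (n + 1))⁻¹ (Fin.last n) (Fin.last n)) ∧
    (∀ lam : ℂ, lam.im ≠ 0 → 0 < (-(eta) * (P n lam / P (n + 1) lam)).im / lam.im) ∧
    (∀ x y : ℝ, x < y → P (n + 1) (x : ℂ) = 0 → P (n + 1) (y : ℂ) = 0 →
      (∀ t ∈ Set.Ioo x y, P (n + 1) (t : ℂ) ≠ 0) →
      ∃! t : ℝ, t ∈ Set.Ioo x y ∧ P n (t : ℂ) = 0) := by
  have hH (m : ℕ) := npH_isHermitian (a1 := a1) (b := b) (z := z) 0 m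
  have hJ (m : ℕ) := npJ_posDef (b := b) 0 m
  have hreal (j : ℕ) (lam : ℂ) (h : P j lam = 0) : lam.im = 0 :=
    im_eq_zero_of_det_smul_sub_eq_zero (hH j) (hJ j) ((hP j lam).symm.trans h)
  have hratio (lam : ℂ) : P n lam / P (n + 1) lam =
      (lam • npJ b 0 (n + 1) - npH a1 b z 0 (n + 1))⁻¹ (Fin.last n) (Fin.last n) := by
    rw [inv_apply_last_last, smul_npJ_sub_npH_submatrix_castSucc, hP, hP]
  refine ⟨fun lam h => h.elim (hreal n lam) (hreal (n + 1) lam), fun lam _ => ?_,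
    fun lam hlam => ?_, fun x y hxy hx hy hxy0 => ?_⟩
  · rw [neg_div, hratio, ← Matrix.neg_apply, ← Matrix.inv_neg, neg_sub]
  · rw [hratio]
    exact pos_im_neg_mul_inv_smul_sub_apply_self_div_im (hH _) (hJ _)
      (heta ▸ div_pos (hJ _).det_pos (hJ _).det_pos) hlam _
  · simp only [hP] at hx hy hxy0 ⊢
    exact existsUnique_mem_Ioo_det_smul_npJ_sub_npH_eq_zero (fun j => (hb j).ne')
      (fun j => (hz j).ne') 0 n hxy hx hy hxy0
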